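/- There is no nontrivial closed V-path a₀, b₀, a₁, …, b_r, a_{r+1} in which a₀ is a face sequence of type 3, 5 or 7. -/

import Mathlib

set_option linter.unusedVariables false

/-- The alphabet `{0, 1, ∗}` for face sequences. -/
inductive Letter : Type
  | zero
  | one
  | star
  deriving DecidableEq

/-- A sequence of length `n` over the alphabet `{0, 1, ∗}`. -/
abbrev FSeq (n : ℕ) := Fin n → Letter

/-- `S(1)`, the number of `1`'s in `S`. -/
def count1 {n : ℕ} (S : FSeq n) : ℕ := (Finset.univ.filter fun i => S i = Letter.one).card

/-- `S(0)`, the number of `0`'s in `S`. -/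
def count0 {n : ℕ} (S : FSeq n) : ℕ := (Finset.univ.filter fun i => S i = Letter.zero).card

/-- The number of `∗`'s in `S`. -/
def countStar {n : ℕ} (S : FSeq n) : ℕ := (Finset.univ.filter fun i => S i = Letter.star).card

/-- A face sequence: either no `∗` and exactly `k` ones, or at most `k-1` ones and
(#ones) + (#stars) ≥ `k+1`. -/
def FaceSeq {n : ℕ} (k : ℕ) (S : FSeq n) : Prop :=
  (countStar S = 0 ∧ count1 S = k) ∨ (count1 S + 1 ≤ k ∧ k + 1 ≤ count1 S + countStar S)

/-- `v₀`, the sequence of `k` ones followed by `n - k` zeros. -/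
def v0seq (n k : ℕ) : FSeq n := fun i => if (i : ℕ) < k then Letter.one else Letter.zero

/-- `S` contains at least one `∗`. -/
def hasStar {n : ℕ} (S : FSeq n) : Prop := ∃ i, S i = Letter.star

/-- There is a `1` to the right of the rightmost `∗` (in particular `S` contains a `∗`). -/
def OneRight {n : ℕ} (S : FSeq n) : Prop :=
  hasStar S ∧ ∃ i, S i = Letter.one ∧ ∀ j, i < j → S j ≠ Letter.star

/-- There is no `1` to the right of the rightmost `∗` (and `S` contains a `∗`). -/
def NoOneRight {n : ℕ} (S : FSeq n) : Prop :=
  hasStar S ∧ ∀ i, S i = Letter.one → ∃ j, i < j ∧ S j = Letter.star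

/-- There is a `0` to the left of the leftmost `∗` (in particular `S` contains a `∗`). -/
def ZeroLeft {n : ℕ} (S : FSeq n) : Prop :=
  hasStar S ∧ ∃ i, S i = Letter.zero ∧ ∀ j, j < i → S j ≠ Letter.star

/-- There is no `0` to the left of the leftmost `∗` (and `S` contains a `∗`). -/
def NoZeroLeft {n : ℕ} (S : FSeq n) : Prop :=
  hasStar S ∧ ∀ i, S i = Letter.zero → ∃ j, j < i ∧ S j = Letter.star

/-- `i` is the position of the rightmost `1` of `S`. -/
def IsRightmostOne {n : ℕ} (S : FSeq n) (i : Fin n) : Prop :=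
  S i = Letter.one ∧ ∀ j, i < j → S j ≠ Letter.one

/-- `i` is the position of the rightmost `∗` of `S`. -/
def IsRightmostStar {n : ℕ} (S : FSeq n) (i : Fin n) : Prop :=
  S i = Letter.star ∧ ∀ j, i < j → S j ≠ Letter.star

/-- `i` is the position of the leftmost `0` of `S`. -/
def IsLeftmostZero {n : ℕ} (S : FSeq n) (i : Fin n) : Prop :=
  S i = Letter.zero ∧ ∀ j, j < i → S j ≠ Letter.zero

/-- `i` is the position of the leftmost `∗` of `S`. -/
def IsLeftmostStar {n : ℕ} (S : FSeq n) (i : Fin n) : Prop :=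
  S i = Letter.star ∧ ∀ j, j < i → S j ≠ Letter.star

/-- Condition of rule (1), subcondition (a). -/
def Cond1a {n : ℕ} (k m0 m1 : ℕ) (S : FSeq n) : Prop :=
  count1 S + 1 ≤ k ∧ OneRight S ∧ count1 S ≠ m1

/-- Condition of rule (1), subcondition (b). -/
def Cond1b {n : ℕ} (k m0 m1 : ℕ) (S : FSeq n) : Prop :=
  count1 S + 1 ≤ k ∧ OneRight S ∧ count1 S = m1 ∧ m0 < count0 S

/-- Condition of rule (1), subcondition (c): no `0` to the left of the leftmost `∗`. -/
def Cond1c {n : ℕ} (k m0 m1 : ℕ) (S : FSeq n) : Prop :=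
  count1 S + 1 ≤ k ∧ OneRight S ∧ count1 S = m1 ∧ count0 S = m0 ∧ NoZeroLeft S

/-- Condition of rule (2), subcondition (a): here `count1 S + 1 ≠ m1` encodes `S(1) ≠ m₁ - 1`. -/
def Cond2a {n : ℕ} (k m0 m1 : ℕ) (S : FSeq n) : Prop :=
  count1 S + 2 ≤ k ∧ NoOneRight S ∧ count1 S + 1 ≠ m1

/-- Condition of rule (2), subcondition (b). -/
def Cond2b {n : ℕ} (k m0 m1 : ℕ) (S : FSeq n) : Prop :=
  count1 S + 2 ≤ k ∧ NoOneRight S ∧ count1 S + 1 = m1 ∧ m0 < count0 S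

/-- Condition of rule (2), subcondition (c). -/
def Cond2c {n : ℕ} (k m0 m1 : ℕ) (S : FSeq n) : Prop :=
  count1 S + 2 ≤ k ∧ NoOneRight S ∧ count1 S + 1 = m1 ∧ count0 S = m0 ∧ NoZeroLeft S

/-- `S` is of type 1 (satisfies the condition of rule (1)). -/
def Type1 {n : ℕ} (k m0 m1 : ℕ) (S : FSeq n) : Prop :=
  Cond1a k m0 m1 S ∨ Cond1b k m0 m1 S ∨ Cond1c k m0 m1 S

/-- `S` is of type 2 (satisfies the condition of rule (2)). -/
def Type2 {n : ℕ} (k m0 m1 : ℕ) (S : FSeq n) : Prop :=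
  Cond2a k m0 m1 S ∨ Cond2b k m0 m1 S ∨ Cond2c k m0 m1 S

/-- `S` is of type 3: `S(1) = k-1`, `S(0) ≤ n-k-1`, no `1` right of the rightmost `∗`,
a `0` left of the leftmost `∗`. -/
def Type3 {n : ℕ} (k : ℕ) (S : FSeq n) : Prop :=
  count1 S + 1 = k ∧ count0 S + k + 1 ≤ n ∧ NoOneRight S ∧ ZeroLeft S

/-- `S` is of type 4: `S(1) = k-1`, `S(0) ≤ n-k-2`, no `1` right of the rightmost `∗`,
no `0` left of the leftmost `∗`. -/
def Type4 {n : ℕ} (k : ℕ) (S : FSeq n) : Prop :=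
  count1 S + 1 = k ∧ count0 S + k + 2 ≤ n ∧ NoOneRight S ∧ NoZeroLeft S

/-- `S` is of type 5: `S(1) = m₁`, `S(0) ≤ m₀`, a `1` right of the rightmost `∗`,
a `0` left of the leftmost `∗`. -/
def Type5 {n : ℕ} (m0 m1 : ℕ) (S : FSeq n) : Prop :=
  count1 S = m1 ∧ count0 S ≤ m0 ∧ OneRight S ∧ ZeroLeft S

/-- `S` is of type 6: `S(1) = m₁`, `S(0) < m₀`, a `1` right of the rightmost `∗`,
no `0` left of the leftmost `∗`. -/
def Type6 {n : ℕ} (m0 m1 : ℕ) (S : FSeq n) : Prop :=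
  count1 S = m1 ∧ count0 S < m0 ∧ OneRight S ∧ NoZeroLeft S

/-- `S` is of type 7: `S(1) = m₁-1`, `S(0) ≤ m₀`, no `1` right of the rightmost `∗`,
a `0` left of the leftmost `∗`. -/
def Type7 {n : ℕ} (m0 m1 : ℕ) (S : FSeq n) : Prop :=
  count1 S + 1 = m1 ∧ count0 S ≤ m0 ∧ NoOneRight S ∧ ZeroLeft S

/-- `S` is of type 8: `S(1) = m₁-1`, `S(0) < m₀`, no `1` right of the rightmost `∗`,
no `0` left of the leftmost `∗`. -/
def Type8 {n : ℕ} (m0 m1 : ℕ) (S : FSeq n) : Prop :=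
  count1 S + 1 = m1 ∧ count0 S < m0 ∧ NoOneRight S ∧ NoZeroLeft S

/-- `S` is of type 9: `S(1) = k`, `S(0) = n-k`, and `S ≠ v₀`. -/
def Type9 {n : ℕ} (k : ℕ) (S : FSeq n) : Prop :=
  count1 S = k ∧ count0 S + k = n ∧ S ≠ v0seq n k

/-- `S` is of type 10: `S(1) = k-1`, `S(0) = n-k-1`, no `1` right of the rightmost `∗`,
no `0` left of the leftmost `∗`. -/
def Type10 {n : ℕ} (k : ℕ) (S : FSeq n) : Prop :=
  count1 S + 1 = k ∧ count0 S + k + 1 = n ∧ NoOneRight S ∧ NoZeroLeft S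

/-- `S` is of type `i` for `1 ≤ i ≤ 10` (and of no type otherwise). -/
def OfType {n : ℕ} (k m0 m1 : ℕ) (i : ℕ) (S : FSeq n) : Prop :=
  match i with
  | 1 => Type1 k m0 m1 S
  | 2 => Type2 k m0 m1 S
  | 3 => Type3 k S
  | 4 => Type4 k S
  | 5 => Type5 m0 m1 S
  | 6 => Type6 m0 m1 S
  | 7 => Type7 m0 m1 S
  | 8 => Type8 m0 m1 S
  | 9 => Type9 k S
  | 10 => Type10 k S
  | _ => False

/-- The replacement of rule (1): replace the rightmost `1` with `∗`. -/
def Apply1 {n : ℕ} (S S' : FSeq n) : Prop :=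
  ∃ i, IsRightmostOne S i ∧ S' = Function.update S i Letter.star

/-- The replacement of rule (2): replace the rightmost `∗` with `1`. -/
def Apply2 {n : ℕ} (S S' : FSeq n) : Prop :=
  ∃ i, IsRightmostStar S i ∧ S' = Function.update S i Letter.one

/-- The replacement of rules (3), (5) and (7): replace the leftmost `0` with `∗`. -/
def Apply3 {n : ℕ} (S S' : FSeq n) : Prop :=
  ∃ i, IsLeftmostZero S i ∧ S' = Function.update S i Letter.star

/-- The replacement of rules (4), (6) and (8): replace the leftmost `∗` with `0`. -/
def Apply4 {n : ℕ} (S S' : FSeq n) : Prop :=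
  ∃ i, IsLeftmostStar S i ∧ S' = Function.update S i Letter.zero

/-- The replacement of rule (9): replace the leftmost `0` and the rightmost `1` each with `∗`. -/
def Apply9 {n : ℕ} (S S' : FSeq n) : Prop :=
  ∃ i j, IsLeftmostZero S i ∧ IsRightmostOne S j ∧
    S' = Function.update (Function.update S i Letter.star) j Letter.star

/-- The replacement of rule (10): replace the leftmost `∗` with `0` and the other `∗` with `1`. -/
def Apply10 {n : ℕ} (S S' : FSeq n) : Prop :=
  ∃ i j, IsLeftmostStar S i ∧ IsRightmostStar S j ∧ i ≠ j ∧
    S' = Function.update (Function.update S i Letter.zero) j Letter.one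

/-- The matching `V` on face sequences: a face sequence `S` of type 1, 3, 5, 7 or 9 is
matched with the result `S'` of applying the corresponding rule to it. -/
def Vmatch {n : ℕ} (k m0 m1 : ℕ) (S S' : FSeq n) : Prop :=
  FaceSeq k S ∧
    ((Type1 k m0 m1 S ∧ Apply1 S S') ∨
     (Type3 k S ∧ Apply3 S S') ∨
     (Type5 m0 m1 S ∧ Apply3 S S') ∨
     (Type7 m0 m1 S ∧ Apply3 S S') ∨
     (Type9 k S ∧ Apply9 S S'))

/-- The vertex set of a face sequence `S`: the vertex sequences (0/1-sequences with
exactly `k` ones) agreeing with `S` wherever `S` is not `∗`. -/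
def VertexSet {n : ℕ} (k : ℕ) (S : FSeq n) : Set (FSeq n) :=
  {v | (∀ i, v i ≠ Letter.star) ∧ count1 v = k ∧ ∀ i, S i ≠ Letter.star → v i = S i}

/-- The dimension of the face `F(S)`. -/
def fdim {n : ℕ} (S : FSeq n) : ℕ :=
  if countStar S = 0 then 0 else countStar S - 1

/-- `T` is a codimension-1 face of `S`. -/
def Codim1 {n : ℕ} (k : ℕ) (T S : FSeq n) : Prop :=
  VertexSet k T ⊂ VertexSet k S ∧ fdim T + 1 = fdim S

/-- A (nontrivial) `V`-path `a₀, b₀, a₁, b₁, …, b_r, a_{r+1}` of face sequences. -/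
structure VPath (n k m0 m1 r : ℕ) where
  a : Fin (r + 2) → FSeq n
  b : Fin (r + 1) → FSeq n
  face_a : ∀ i, FaceSeq k (a i)
  face_b : ∀ i, FaceSeq k (b i)
  mem : ∀ i : Fin (r + 1), Vmatch k m0 m1 (a i.castSucc) (b i)
  codim_left : ∀ i : Fin (r + 1), Codim1 k (a i.castSucc) (b i)
  codim_right : ∀ i : Fin (r + 1), Codim1 k (a i.succ) (b i)
  step_ne : ∀ i : Fin (r + 1), a i.castSucc ≠ a i.succ


/-!
Along a `V`-path through faces with a `∗`, each step turns a pivot of `aᵢ` (the last `1`,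
followed only by `0`'s, or the first `0`, preceded only by `1`'s) into a `∗` and then fills one
`∗`; this never shrinks the initial block of `1`'s or the final block of `0`'s. On a closed path
both blocks are therefore constant, so no step refills its own pivot: a step out of a type-1 face
ends in a face with no `1` right of its last `∗`, a step out of a type-3/5/7 face in one with no
`0` left of its first `∗`. Since `a₀` has a `0` left of its first `∗`, the last step is of the
first kind, so `a₀` is of type 3 or 7; then `a₁` can only be matched by rule (1), which the
comparison of `a₁` with `a₀` rules out.
-/
open Finset Function

lemma Finset.card_filter_update_add {ι α : Type*} [Fintype ι] [DecidableEq ι] [DecidableEq α]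
    (S : ι → α) (x : ι) (c L : α) :
    #{j | update S x c j = L} + (if S x = L then 1 else 0) =
      #{j | S j = L} + (if c = L then 1 else 0) := by
  simp only [card_filter, ← add_sum_erase _ _ (mem_univ x), update_self]
  have h : ∀ j ∈ univ.erase x,
      (if update S x c j = L then 1 else 0) = if S j = L then 1 else 0 :=
    fun j hj => by rw [update_of_ne (ne_of_mem_erase hj)]
  rw [sum_congr rfl h]
  ring

lemma Fin.succ_le_castSucc_of_last_le {α : Type*} [Preorder α] {m : ℕ} {f : Fin (m + 1) → α}
    (hf : ∀ i : Fin m, f i.castSucc ≤ f i.succ) (hcl : f (Fin.last m) ≤ f 0) (i : Fin m) :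
    f i.succ ≤ f i.castSucc :=
  have hm := Fin.monotone_iff_le_succ.2 hf
  calc f i.succ ≤ f (Fin.last m) := hm (Fin.le_last _)
    _ ≤ f 0 := hcl
    _ ≤ f i.castSucc := hm (Fin.zero_le _)

section Counting

variable {n k : ℕ} {S u : FSeq n}

lemma count0_add_count1_add_countStar (S : FSeq n) :
    count0 S + count1 S + countStar S = n := by
  simp only [count0, count1, countStar, card_filter, ← sum_add_distrib]
  calc _ = ∑ _ : Fin n, 1 := sum_congr rfl fun i _ => by cases S i <;> rfl
    _ = n := by simp

lemma hasStar_iff_countStar_pos : hasStar S ↔ 0 < countStar S := by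
  simp [hasStar, countStar, card_pos, filter_nonempty_iff]

lemma FaceSeq.count1_lt_of_hasStar (hS : FaceSeq k S) (h : hasStar S) : count1 S < k := by
  have := hasStar_iff_countStar_pos.1 h
  rcases hS with ⟨_, _⟩ | ⟨_, _⟩ <;> omega

lemma FaceSeq.lt_count1_add_countStar_of_hasStar (hS : FaceSeq k S) (h : hasStar S) :
    k < count1 S + countStar S := by
  have := hasStar_iff_countStar_pos.1 h
  rcases hS with ⟨_, _⟩ | ⟨_, _⟩ <;> omega

lemma Type9.countStar_eq_zero (h : Type9 k S) : countStar S = 0 := by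
  have := count0_add_count1_add_countStar S
  obtain ⟨_, _, -⟩ := h
  omega

lemma countStar_update_star {x : Fin n} (hx : u x ≠ Letter.star) :
    countStar (update u x Letter.star) = countStar u + 1 := by
  have := card_filter_update_add u x Letter.star Letter.star
  simp only [hx, if_true, if_false] at this
  exact this

lemma countStar_update_of_eq_star {y : Fin n} {c : Letter} (hy : u y = Letter.star)
    (hc : c ≠ Letter.star) : countStar (update u y c) + 1 = countStar u := by
  have := card_filter_update_add u y c Letter.star
  simp only [hy, hc, if_true, if_false] at this
  exact this

end Counting

section Faces

variable {n k : ℕ} {S T : FSeq n}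

def stars (S : FSeq n) : Finset (Fin n) := univ.filter fun i => S i = Letter.star

lemma card_stars (S : FSeq n) : #(stars S) = countStar S := rfl

@[simp] lemma mem_stars {i : Fin n} : i ∈ stars S ↔ S i = Letter.star := by simp [stars]

def fillStars (T : FSeq n) (P : Finset (Fin n)) : FSeq n := fun i =>
  if T i = Letter.star then (if i ∈ P then Letter.one else Letter.zero) else T i

lemma fillStars_mem_vertexSet {P : Finset (Fin n)} (hP : ∀ i ∈ P, T i = Letter.star)
    (hk : count1 T + #P = k) : fillStars T P ∈ VertexSet k T := by
  refine ⟨fun i => ?_, ?_, fun i hi => by simp [fillStars, hi]⟩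
  · unfold fillStars
    split_ifs <;> simp_all
  · have hfilter : (univ.filter fun i => fillStars T P i = Letter.one) =
        (univ.filter fun i => T i = Letter.one) ∪ P := by
      ext i
      simp only [mem_filter, mem_union, mem_univ, true_and]
      unfold fillStars
      by_cases hi : T i = Letter.star
      · simp [hi]
      · have hiP : i ∉ P := fun h => hi (hP i h)
        simp [hi, hiP]
    have hdisj : Disjoint (univ.filter fun i => T i = Letter.one) P :=
      disjoint_left.2 fun i hi hiP => by simp_all
    rw [count1, hfilter, card_union_of_disjoint hdisj]
    exact hk

lemma FaceSeq.exists_vertex_apply_eq (hT : FaceSeq k T) {j : Fin n} (hj : T j = Letter.star)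
    {c : Letter} (hc : c ≠ Letter.star) : ∃ v ∈ VertexSet k T, v j = c := by
  have h1 := hT.count1_lt_of_hasStar ⟨j, hj⟩
  have h2 := hT.lt_count1_add_countStar_of_hasStar ⟨j, hj⟩
  set Z := stars T
  have hjZ : j ∈ Z := mem_stars.2 hj
  have hZ : #(Z.erase j) + 1 = countStar T := card_erase_add_one hjZ
  obtain ⟨P, hPZ, hPcard, hjP⟩ :
      ∃ P ⊆ Z, #P = k - count1 T ∧ (j ∈ P ↔ c = Letter.one) := by
    cases c
    · obtain ⟨P, hP, hcard⟩ :=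
        exists_subset_card_eq (s := Z.erase j) (n := k - count1 T) (by omega)
      refine ⟨P, hP.trans (erase_subset _ _), hcard, ?_⟩
      simpa using fun h => notMem_erase j Z (hP h)
    · obtain ⟨P, hP, hcard⟩ :=
        exists_subset_card_eq (s := Z.erase j) (n := k - count1 T - 1) (by omega)
      refine ⟨insert j P, insert_subset hjZ (hP.trans (erase_subset _ _)), ?_, by simp⟩
      rw [card_insert_of_notMem fun h => notMem_erase j Z (hP h), hcard]
      omega
    · exact absurd rfl hc
  refine ⟨fillStars T P,
    fillStars_mem_vertexSet (fun i hi => mem_stars.1 (hPZ hi)) (by omega), ?_⟩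
  cases c <;> simp_all [fillStars]

lemma FaceSeq.vertexSet_nonempty (hT : FaceSeq k T) : (VertexSet k T).Nonempty := by
  by_cases h : hasStar T
  · obtain ⟨j, hj⟩ := h
    obtain ⟨v, hv, -⟩ := hT.exists_vertex_apply_eq hj (c := Letter.zero) (by simp)
    exact ⟨v, hv⟩
  · have hs : countStar T = 0 := by rw [hasStar_iff_countStar_pos] at h; omega
    refine ⟨T, fun i hi => h ⟨i, hi⟩, ?_, fun _ _ => rfl⟩
    rcases hT with ⟨_, _⟩ | ⟨_, _⟩ <;> omega

/-- A `∗` of `T` is seen by vertices of `T` with both values there, so it is a `∗` of `S`. -/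
lemma FaceSeq.apply_eq_of_vertexSet_subset (hT : FaceSeq k T)
    (h : VertexSet k T ⊆ VertexSet k S) {i : Fin n} (hi : S i ≠ Letter.star) : T i = S i := by
  by_cases hTi : T i = Letter.star
  · obtain ⟨v, hv, hvi⟩ := hT.exists_vertex_apply_eq hTi (c := Letter.zero) (by simp)
    obtain ⟨w, hw, hwi⟩ := hT.exists_vertex_apply_eq hTi (c := Letter.one) (by simp)
    have := (h hv).2.2 i hi
    have := (h hw).2.2 i hi
    simp_all
  · obtain ⟨v, hv⟩ := hT.vertexSet_nonempty
    rw [← hv.2.2 i hTi, (h hv).2.2 i hi]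

lemma Codim1.exists_eq_update (hc : Codim1 k T S) (hT : FaceSeq k T) (hS : 3 ≤ countStar S) :
    ∃ y c, S y = Letter.star ∧ c ≠ Letter.star ∧ T = update S y c := by
  have hagree : ∀ i, S i ≠ Letter.star → T i = S i :=
    fun i => hT.apply_eq_of_vertexSet_subset hc.1.subset
  have hsub : stars T ⊆ stars S := fun i hi => by
    rw [mem_stars] at hi ⊢
    by_contra hne
    exact hne (hagree i hne ▸ hi)
  have hcard : countStar T + 1 = countStar S := by
    have h := hc.2
    unfold fdim at h
    split_ifs at h <;> omega
  obtain ⟨y, hy⟩ := card_eq_one.1 (show #(stars S \ stars T) = 1 by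
    rw [card_sdiff_of_subset hsub, card_stars, card_stars]
    omega)
  have hmem : ∀ i, (S i = Letter.star ∧ T i ≠ Letter.star) ↔ i = y := fun i => by
    simpa using congrArg (i ∈ ·) hy
  obtain ⟨hSy, hTy⟩ := (hmem y).2 rfl
  refine ⟨y, T y, hSy, hTy, funext fun i => ?_⟩
  rcases eq_or_ne i y with rfl | hiy
  · simp
  · rw [update_of_ne hiy]
    by_cases hSi : S i = Letter.star
    · by_contra hne
      exact hiy ((hmem i).1 ⟨hSi, fun hTi => hne (hTi.trans hSi.symm)⟩)
    · exact hagree i hSi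

end Faces

section Patterns

variable {n k m0 m1 : ℕ} {u : FSeq n} {x p : Fin n}

lemma OneRight.not_noOneRight (h : OneRight u) : ¬ NoOneRight u := fun h' => by
  obtain ⟨-, i, hi, hno⟩ := h
  obtain ⟨j, hij, hj⟩ := h'.2 i hi
  exact hno j hij hj

lemma ZeroLeft.not_noZeroLeft (h : ZeroLeft u) : ¬ NoZeroLeft u := fun h' => by
  obtain ⟨-, i, hi, hno⟩ := h
  obtain ⟨j, hji, hj⟩ := h'.2 i hi
  exact hno j hji hj

lemma Type1.oneRight (h : Type1 k m0 m1 u) : OneRight u := by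
  rcases h with h | h | h <;> exact h.2.1

lemma noOneRight_iff :
    NoOneRight u ↔ ∃ R, u R = Letter.star ∧ ∀ j, R < j → u j = Letter.zero := by
  constructor
  · rintro ⟨⟨p, hp⟩, hone⟩
    obtain ⟨R, hR, hmax⟩ := (stars u).exists_max_image id ⟨p, mem_stars.2 hp⟩
    simp only [mem_stars, id] at hR hmax
    refine ⟨R, hR, fun j hj => ?_⟩
    have h1 : u j ≠ Letter.star := fun h => (hmax j h).not_gt hj
    have h2 : u j ≠ Letter.one := fun h => by
      obtain ⟨q, hjq, hq⟩ := hone j h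
      exact (hmax q hq).not_gt (hj.trans hjq)
    cases hu : u j <;> simp_all
  · rintro ⟨R, hR, hzero⟩
    refine ⟨⟨R, hR⟩, fun i hi => ⟨R, ?_, hR⟩⟩
    rcases lt_trichotomy i R with h | rfl | h
    · exact h
    · simp [hR] at hi
    · simp [hzero i h] at hi

lemma noZeroLeft_of_forall_lt (hL : u x = Letter.star) (h : ∀ j, j < x → u j = Letter.one) :
    NoZeroLeft u := by
  refine ⟨⟨x, hL⟩, fun i hi => ⟨x, ?_, hL⟩⟩
  rcases lt_trichotomy x i with h' | rfl | h'
  · exact h'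
  · simp [hL] at hi
  · simp [h i h'] at hi

/-- The pivot `x` of rule (1): `u` reads `1 0 ⋯ 0` from position `x` on. -/
def OneThenZeros (u : FSeq n) (x : Fin n) : Prop :=
  u x = Letter.one ∧ ∀ j, x < j → u j = Letter.zero

/-- The pivot `x` of rules (3), (5), (7): `u` reads `1 ⋯ 1 0` up to position `x`. -/
def OnesThenZero (u : FSeq n) (x : Fin n) : Prop :=
  u x = Letter.zero ∧ ∀ j, j < x → u j = Letter.one

lemma IsRightmostOne.oneThenZeros (h : IsRightmostOne u x) (hr : OneRight u) :
    OneThenZeros u x := by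
  obtain ⟨-, z, hz, hns⟩ := hr
  refine ⟨h.1, fun j hj => ?_⟩
  have hzx : z ≤ x := not_lt.1 fun hxz => h.2 z hxz hz
  have h1 := h.2 j hj
  have h2 := hns j (hzx.trans_lt hj)
  cases hu : u j <;> simp_all

lemma IsLeftmostZero.onesThenZero (h : IsLeftmostZero u x) (hl : ZeroLeft u) :
    OnesThenZero u x := by
  obtain ⟨-, z, hz, hns⟩ := hl
  refine ⟨h.1, fun j hj => ?_⟩
  have hxz : x ≤ z := not_lt.1 fun hzx => h.2 z hzx hz
  have h1 := h.2 j hj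
  have h2 := hns j (hj.trans_le hxz)
  cases hu : u j <;> simp_all

lemma OneThenZeros.lt_of_eq_star (h : OneThenZeros u x) (hp : u p = Letter.star) : p < x := by
  by_contra! hxp
  rcases hxp.lt_or_eq with hxp | rfl
  · simp [h.2 p hxp] at hp
  · simp [h.1] at hp

lemma OnesThenZero.lt_of_eq_star (h : OnesThenZero u x) (hp : u p = Letter.star) : x < p := by
  by_contra! hpx
  rcases hpx.lt_or_eq with hpx | rfl
  · simp [h.2 p hpx] at hp
  · simp [h.1] at hp

lemma OneThenZeros.not_noOneRight (h : OneThenZeros u x) : ¬ NoOneRight u := fun h' => by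
  obtain ⟨q, hxq, hq⟩ := h'.2 x h.1
  simp [h.2 q hxq] at hq

lemma ne_star_of_oneThenZeros_or_onesThenZero (h : OneThenZeros u x ∨ OnesThenZero u x) :
    u x ≠ Letter.star := by
  rcases h with h | h <;> simp [h.1]

def onesPrefix (u : FSeq n) : Set (Fin n) := {i | ∀ j, j ≤ i → u j = Letter.one}

def zerosSuffix (u : FSeq n) : Set (Fin n) := {i | ∀ j, i ≤ j → u j = Letter.zero}

lemma onesPrefix_subset_of_eqOn {v : FSeq n} (h : Set.EqOn v u (onesPrefix u)) :
    onesPrefix u ⊆ onesPrefix v :=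
  fun _ hi j hji => (h fun l hlj => hi l (hlj.trans hji)).trans (hi j hji)

lemma zerosSuffix_subset_of_eqOn {v : FSeq n} (h : Set.EqOn v u (zerosSuffix u)) :
    zerosSuffix u ⊆ zerosSuffix v :=
  fun _ hi j hij => (h fun l hjl => hi l (hij.trans hjl)).trans (hi j hij)

end Patterns

/-- One step `u → v` of a `V`-path: the matching turns the pivot `x` of `u` into a `∗`, and the
codimension-one face `v` fills the `∗` at `y` with `c`. -/
def VStep {n : ℕ} (u v : FSeq n) (x y : Fin n) (c : Letter) : Prop :=
  (OneThenZeros u x ∨ OnesThenZero u x) ∧ update u x Letter.star y = Letter.star ∧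
    c ≠ Letter.star ∧ v = update (update u x Letter.star) y c

namespace VStep

variable {n k m0 m1 : ℕ} {u v : FSeq n} {x y : Fin n} {c : Letter}

lemma apply_of_ne (h : VStep u v x y c) {j : Fin n} (hx : j ≠ x) (hy : j ≠ y) : v j = u j := by
  rw [h.2.2.2, update_of_ne hy, update_of_ne hx]

lemma apply_fill (h : VStep u v x y c) : v y = c := by
  rw [h.2.2.2, update_self]

lemma apply_pivot (h : VStep u v x y c) (hyx : y ≠ x) : v x = Letter.star := by
  rw [h.2.2.2, update_of_ne hyx.symm, update_self]

lemma eq_star_of_ne (h : VStep u v x y c) (hyx : y ≠ x) : u y = Letter.star := by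
  simpa [update_of_ne hyx] using h.2.1

lemma countStar_eq (h : VStep u v x y c) : countStar v = countStar u := by
  have hx := countStar_update_star (ne_star_of_oneThenZeros_or_onesThenZero h.1)
  have hy := countStar_update_of_eq_star h.2.1 h.2.2.1
  rw [h.2.2.2]
  omega

lemma onesPrefix_subset (h : VStep u v x y c) (hu : hasStar u) : onesPrefix u ⊆ onesPrefix v := by
  have hx : x ∉ onesPrefix u := by
    rcases h.1 with hx | hx
    · obtain ⟨p, hp⟩ := hu
      exact fun hxu => by simpa [hp] using hxu p (hx.lt_of_eq_star hp).le
    · exact fun hxu => by simpa [hx.1] using hxu x le_rfl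
  have hy : y ∉ onesPrefix u := by
    by_cases hyx : y = x
    · exact hyx ▸ hx
    · exact fun hyu => by simpa [h.eq_star_of_ne hyx] using hyu y le_rfl
  exact onesPrefix_subset_of_eqOn fun j hj =>
    h.apply_of_ne (ne_of_mem_of_not_mem hj hx) (ne_of_mem_of_not_mem hj hy)

lemma zerosSuffix_subset (h : VStep u v x y c) (hu : hasStar u) :
    zerosSuffix u ⊆ zerosSuffix v := by
  have hx : x ∉ zerosSuffix u := by
    rcases h.1 with hx | hx
    · exact fun hxu => by simpa [hx.1] using hxu x le_rfl
    · obtain ⟨p, hp⟩ := hu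
      exact fun hxu => by simpa [hp] using hxu p (hx.lt_of_eq_star hp).le
  have hy : y ∉ zerosSuffix u := by
    by_cases hyx : y = x
    · exact hyx ▸ hx
    · exact fun hyu => by simpa [h.eq_star_of_ne hyx] using hyu y le_rfl
  exact zerosSuffix_subset_of_eqOn fun j hj =>
    h.apply_of_ne (ne_of_mem_of_not_mem hj hx) (ne_of_mem_of_not_mem hj hy)

/-- Refilling the pivot itself either undoes the step or lengthens one of the two blocks. -/
lemma ne_pivot (h : VStep u v x y c) (huv : u ≠ v) (hp : onesPrefix v ⊆ onesPrefix u)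
    (hs : zerosSuffix v ⊆ zerosSuffix u) : y ≠ x := by
  rintro rfl
  have hv : v = update u y c := by rw [h.2.2.2, update_idem]
  rcases h.1 with ⟨h1, h0⟩ | ⟨h0, h1⟩
  · cases c
    · have hy : y ∈ zerosSuffix v := fun j hj => by
        rcases hj.lt_or_eq with hj | rfl
        · rw [hv, update_of_ne hj.ne', h0 j hj]
        · rw [hv, update_self]
      simpa [h1] using hs hy y le_rfl
    · exact huv (by rw [hv, ← h1, update_eq_self])
    · exact h.2.2.1 rfl
  · cases c
    · exact huv (by rw [hv, ← h0, update_eq_self])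
    · have hy : y ∈ onesPrefix v := fun j hj => by
        rcases hj.lt_or_eq with hj | rfl
        · rw [hv, update_of_ne hj.ne, h1 j hj]
        · rw [hv, update_self]
      simpa [h0] using hp hy y le_rfl
    · exact h.2.2.1 rfl

lemma noOneRight_or_noZeroLeft (h : VStep u v x y c) (hyx : y ≠ x) :
    (OneThenZeros u x ∧ NoOneRight v) ∨ (OnesThenZero u x ∧ x < y ∧ NoZeroLeft v) := by
  rcases h.1 with hx | hx
  · have hyx' : y < x := hx.lt_of_eq_star (h.eq_star_of_ne hyx)
    refine .inl ⟨hx, noOneRight_iff.2 ⟨x, h.apply_pivot hyx, fun j hj => ?_⟩⟩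
    rw [h.apply_of_ne hj.ne' (hyx'.trans hj).ne', hx.2 j hj]
  · have hxy : x < y := hx.lt_of_eq_star (h.eq_star_of_ne hyx)
    refine .inr ⟨hx, hxy, noZeroLeft_of_forall_lt (h.apply_pivot hyx) fun j hj => ?_⟩
    rw [h.apply_of_ne hj.ne (hj.trans hxy).ne, hx.2 j hj]

lemma count1_count0_of_fill_one (h : VStep u v x y Letter.one) (hx : u x = Letter.zero) :
    count1 v = count1 u + 1 ∧ count0 v + 1 = count0 u := by
  have hy : update u x Letter.star y = Letter.star := h.2.1
  have e1 := card_filter_update_add u x Letter.star Letter.one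
  have e2 := card_filter_update_add (update u x Letter.star) y Letter.one Letter.one
  have e3 := card_filter_update_add u x Letter.star Letter.zero
  have e4 := card_filter_update_add (update u x Letter.star) y Letter.one Letter.zero
  simp only [hx, hy, reduceCtorEq, if_true, if_false] at e1 e2 e3 e4
  rw [h.2.2.2]
  unfold count1 count0
  omega

lemma onesThenZero_of_noOneRight (h : VStep u v x y c) (hyx : y ≠ x) (hu : NoOneRight u) :
    OnesThenZero u x ∧ x < y ∧ NoZeroLeft v := by
  rcases h.noOneRight_or_noZeroLeft hyx with ⟨hx, -⟩ | h'
  · exact absurd hu hx.not_noOneRight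
  · exact h'

/-- `y` is the last `∗` of `u`. Filling it with `0` lengthens the final block of `0`'s; filling
it with `1` makes `v` too heavy for a face (type 3) or breaks the counts of rule (1) (type 7). -/
lemma not_type1 (h : VStep u v x y c) (hyx : y ≠ x) (hu : NoOneRight u)
    (hT : Type3 k u ∨ Type7 m0 m1 u) (hv : FaceSeq k v) (hs : zerosSuffix v ⊆ zerosSuffix u) :
    ¬ Type1 k m0 m1 v := by
  intro h1
  obtain ⟨hx, hxy, -⟩ := h.onesThenZero_of_noOneRight hyx hu
  obtain ⟨R, hR, hRz⟩ := noOneRight_iff.1 hu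
  have hyR : y ≤ R := not_lt.1 fun hRy => by simpa [hRz y hRy] using h.eq_star_of_ne hyx
  have hxR := hxy.trans_le hyR
  rcases hyR.lt_or_eq with hyR | rfl
  · refine h1.oneRight.not_noOneRight (noOneRight_iff.2 ⟨R, ?_, fun j hj => ?_⟩)
    · rw [h.apply_of_ne hxR.ne' hyR.ne', hR]
    · rw [h.apply_of_ne (hxR.trans hj).ne' (hyR.trans hj).ne', hRz j hj]
  · cases c
    · have hy : y ∈ zerosSuffix v := fun j hj => by
        rcases hj.lt_or_eq with hj | rfl
        · rw [h.apply_of_ne (hxy.trans hj).ne' hj.ne', hRz j hj]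
        · exact h.apply_fill
      simpa [hR] using hs hy y le_rfl
    · obtain ⟨h1c, h0c⟩ := h.count1_count0_of_fill_one hx.1
      rcases hT with ⟨hk, -⟩ | ⟨hm1, hm0, -⟩
      · have := hv.count1_lt_of_hasStar ⟨x, h.apply_pivot hyx⟩
        omega
      · rcases h1 with ⟨-, -, h⟩ | ⟨-, -, -, h⟩ | ⟨-, -, -, h, -⟩ <;> omega
    · exact h.2.2.1 rfl

end VStep

section VPaths

variable {n k m0 m1 r : ℕ} {u b : FSeq n}

lemma exists_pivot_of_vmatch (hu : hasStar u) (h : Vmatch k m0 m1 u b) :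
    ∃ x, (OneThenZeros u x ∨ OnesThenZero u x) ∧ b = update u x Letter.star := by
  rcases h.2 with
    ⟨ht, x, hx, rfl⟩ | ⟨ht, x, hx, rfl⟩ | ⟨ht, x, hx, rfl⟩ | ⟨ht, x, hx, rfl⟩ | ⟨ht, -⟩
  · exact ⟨x, .inl (hx.oneThenZeros ht.oneRight), rfl⟩
  · exact ⟨x, .inr (hx.onesThenZero ht.2.2.2), rfl⟩
  · exact ⟨x, .inr (hx.onesThenZero ht.2.2.2), rfl⟩
  · exact ⟨x, .inr (hx.onesThenZero ht.2.2.2), rfl⟩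
  · exact absurd ht.countStar_eq_zero (hasStar_iff_countStar_pos.1 hu).ne'

lemma Vmatch.type1 (h : Vmatch k m0 m1 u b) (hu : NoZeroLeft u) : Type1 k m0 m1 u := by
  rcases h.2 with ⟨ht, -⟩ | ⟨ht, -⟩ | ⟨ht, -⟩ | ⟨ht, -⟩ | ⟨ht, -⟩
  · exact ht
  · exact absurd hu ht.2.2.2.not_noZeroLeft
  · exact absurd hu ht.2.2.2.not_noZeroLeft
  · exact absurd hu ht.2.2.2.not_noZeroLeft
  · exact absurd ht.countStar_eq_zero (hasStar_iff_countStar_pos.1 hu.1).ne'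

namespace VPath

variable (P : VPath n k m0 m1 r)

lemma exists_vStep (i : Fin (r + 1)) (hi : 2 ≤ countStar (P.a i.castSucc)) :
    ∃ x y c, VStep (P.a i.castSucc) (P.a i.succ) x y c := by
  obtain ⟨x, hx, hb⟩ :=
    exists_pivot_of_vmatch (hasStar_iff_countStar_pos.2 (by omega)) (P.mem i)
  have hbx := countStar_update_star (ne_star_of_oneThenZeros_or_onesThenZero hx)
  obtain ⟨y, c, hy, hc, hv⟩ :=
    (P.codim_right i).exists_eq_update (P.face_a i.succ) (by rw [hb, hbx]; omega)
  rw [hb] at hy hv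
  exact ⟨x, y, c, hx, hy, hc, hv⟩

lemma two_le_countStar (h : hasStar (P.a 0)) (i : Fin (r + 2)) : 2 ≤ countStar (P.a i) := by
  induction i using Fin.induction with
  | zero =>
    have := (P.face_a 0).count1_lt_of_hasStar h
    have := (P.face_a 0).lt_count1_add_countStar_of_hasStar h
    omega
  | succ i ih =>
    obtain ⟨x, y, c, hs⟩ := P.exists_vStep i ih
    rwa [hs.countStar_eq]

/-- On a closed path the blocks `onesPrefix` and `zerosSuffix`, which never shrink, stay constant,
so no step refills its own pivot. -/
lemma exists_vStep_of_closed (hcl : P.a 0 = P.a (Fin.last (r + 1))) (h : hasStar (P.a 0))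
    (i : Fin (r + 1)) : ∃ x y c, VStep (P.a i.castSucc) (P.a i.succ) x y c ∧ y ≠ x ∧
      zerosSuffix (P.a i.succ) ⊆ zerosSuffix (P.a i.castSucc) := by
  have hstar j : hasStar (P.a j) :=
    hasStar_iff_countStar_pos.2 (by have := P.two_le_countStar h j; omega)
  choose x y c hs using fun j => P.exists_vStep j (P.two_le_countStar h _)
  have hp := Fin.succ_le_castSucc_of_last_le (f := fun j => onesPrefix (P.a j))
    (fun j => (hs j).onesPrefix_subset (hstar _)) (by simp only [← hcl, le_refl]) i
  have hz := Fin.succ_le_castSucc_of_last_le (f := fun j => zerosSuffix (P.a j))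
    (fun j => (hs j).zerosSuffix_subset (hstar _)) (by simp only [← hcl, le_refl]) i
  exact ⟨x i, y i, c i, hs i, (hs i).ne_pivot (P.step_ne i) hp hz, hz⟩

lemma vmatch_of_ne_last {i : Fin (r + 2)} (h : i ≠ Fin.last (r + 1)) :
    Vmatch k m0 m1 (P.a i) (P.b (i.castPred h)) := by
  simpa only [Fin.castSucc_castPred] using P.mem (i.castPred h)

end VPath

end VPaths

theorem no_closed_vpath_type357_general (n k m0 m1 : ℕ) (r : ℕ)
    (P : VPath n k m0 m1 r)
    (h0 : Type3 k (P.a 0) ∨ Type5 m0 m1 (P.a 0) ∨ Type7 m0 m1 (P.a 0)) :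
    P.a 0 ≠ P.a (Fin.last (r + 1)) := by
  intro hcl
  have hZL : ZeroLeft (P.a 0) := by rcases h0 with h | h | h <;> exact h.2.2.2
  have hstep := P.exists_vStep_of_closed hcl hZL.1
  have hNOR : NoOneRight (P.a 0) := by
    obtain ⟨x, y, c, hs, hyx, -⟩ := hstep (Fin.last r)
    rw [Fin.succ_last, ← hcl] at hs
    rcases hs.noOneRight_or_noZeroLeft hyx with ⟨-, h⟩ | ⟨-, -, h⟩
    exacts [h, absurd h hZL.not_noZeroLeft]
  have hT37 : Type3 k (P.a 0) ∨ Type7 m0 m1 (P.a 0) := by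
    rcases h0 with h | h | h
    exacts [.inl h, absurd hNOR h.2.2.1.not_noOneRight, .inr h]
  obtain ⟨x, y, c, hs, hyx, hsuf⟩ := hstep 0
  simp only [Fin.castSucc_zero, Fin.succ_zero_eq_one] at hs hsuf
  have hNZL : NoZeroLeft (P.a 1) := (hs.onesThenZero_of_noOneRight hyx hNOR).2.2
  have hne : (1 : Fin (r + 2)) ≠ Fin.last (r + 1) :=
    fun h => hZL.not_noZeroLeft (by rwa [hcl, ← h])
  exact hs.not_type1 hyx hNOR hT37 (P.face_a 1) hsuf ((P.vmatch_of_ne_last hne).type1 hNZL)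

/-- There is no nontrivial closed `V`-path starting at a face sequence
of type 3, 5 or 7. -/
theorem no_closed_vpath_type357 (n k m0 m1 : ℕ) (hk1 : 1 ≤ k) (hk2 : k ≤ n - 1)
    (hm0 : m0 + k + 1 ≤ n) (hm1l : 1 ≤ m1) (hm1u : m1 + 1 ≤ k) (r : ℕ)
    (P : VPath n k m0 m1 r)
    (h0 : Type3 k (P.a 0) ∨ Type5 m0 m1 (P.a 0) ∨ Type7 m0 m1 (P.a 0)) :
    P.a 0 ≠ P.a (Fin.last (r + 1)) :=
  no_closed_vpath_type357_general n k m0 m1 r P h0
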